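/- arXiv:2506.06713 — 5 statements merged into one kernel-verified Lean document; each statement's English description precedes it below -/
import Mathlib

section
/- Let l, m, p be integers with p ∉ {0,1}, l ∉ {-2,2}, l ≠ 0, ±1 and m ≠ 0, 1. Define Δ(l,m,p) := -2lmp + lm + lp + 2p - 1. Then |Δ(l,m,p)| ≥ 9. -/
theorem delta_estimate (l m p : ℤ)
    (hp0 : p ≠ 0) (hp1 : p ≠ 1)
    (hl2 : l ≠ -2) (hl2' : l ≠ 2) (hl0 : l ≠ 0) (hl1 : l ≠ 1) (hl1' : l ≠ -1)
    (hm0 : m ≠ 0) (hm1 : m ≠ 1) :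
    |(-2) * l * m * p + l * m + l * p + 2 * p - 1| ≥ 9 := by
  have hl : l ≥ 3 ∨ l ≤ -3 := by omega
  have hm : m ≥ 2 ∨ m ≤ -1 := by omega
  have hp : p ≥ 2 ∨ p ≤ -1 := by omega
  rw [ge_iff_le, le_abs]
  rcases hl with hl | hl <;> rcases hm with hm | hm <;> rcases hp with hp | hp
  · right; nlinarith [mul_nonneg (by omega : (0:ℤ) ≤ l-3) (by omega : (0:ℤ) ≤ m-2), mul_nonneg (by omega : (0:ℤ) ≤ l-3) (by omega : (0:ℤ) ≤ p-2), mul_nonneg (by omega : (0:ℤ) ≤ m-2) (by omega : (0:ℤ) ≤ p-2), mul_nonneg (mul_nonneg (by omega : (0:ℤ) ≤ l-3) (by omega : (0:ℤ) ≤ m-2)) (by omega : (0:ℤ) ≤ p-2)]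
  · left; nlinarith [mul_nonneg (by omega : (0:ℤ) ≤ l-3) (by omega : (0:ℤ) ≤ m-2), mul_nonneg (by omega : (0:ℤ) ≤ l-3) (by omega : (0:ℤ) ≤ -1-p), mul_nonneg (by omega : (0:ℤ) ≤ m-2) (by omega : (0:ℤ) ≤ -1-p), mul_nonneg (mul_nonneg (by omega : (0:ℤ) ≤ l-3) (by omega : (0:ℤ) ≤ m-2)) (by omega : (0:ℤ) ≤ -1-p)]
  · left; nlinarith [mul_nonneg (by omega : (0:ℤ) ≤ l-3) (by omega : (0:ℤ) ≤ -1-m), mul_nonneg (by omega : (0:ℤ) ≤ l-3) (by omega : (0:ℤ) ≤ p-2), mul_nonneg (by omega : (0:ℤ) ≤ -1-m) (by omega : (0:ℤ) ≤ p-2), mul_nonneg (mul_nonneg (by omega : (0:ℤ) ≤ l-3) (by omega : (0:ℤ) ≤ -1-m)) (by omega : (0:ℤ) ≤ p-2)]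
  · right; nlinarith [mul_nonneg (by omega : (0:ℤ) ≤ l-3) (by omega : (0:ℤ) ≤ -1-m), mul_nonneg (by omega : (0:ℤ) ≤ l-3) (by omega : (0:ℤ) ≤ -1-p), mul_nonneg (by omega : (0:ℤ) ≤ -1-m) (by omega : (0:ℤ) ≤ -1-p), mul_nonneg (mul_nonneg (by omega : (0:ℤ) ≤ l-3) (by omega : (0:ℤ) ≤ -1-m)) (by omega : (0:ℤ) ≤ -1-p)]
  · left; nlinarith [mul_nonneg (by omega : (0:ℤ) ≤ -3-l) (by omega : (0:ℤ) ≤ m-2), mul_nonneg (by omega : (0:ℤ) ≤ -3-l) (by omega : (0:ℤ) ≤ p-2), mul_nonneg (by omega : (0:ℤ) ≤ m-2) (by omega : (0:ℤ) ≤ p-2), mul_nonneg (mul_nonneg (by omega : (0:ℤ) ≤ -3-l) (by omega : (0:ℤ) ≤ m-2)) (by omega : (0:ℤ) ≤ p-2)]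
  · right; nlinarith [mul_nonneg (by omega : (0:ℤ) ≤ -3-l) (by omega : (0:ℤ) ≤ m-2), mul_nonneg (by omega : (0:ℤ) ≤ -3-l) (by omega : (0:ℤ) ≤ -1-p), mul_nonneg (by omega : (0:ℤ) ≤ m-2) (by omega : (0:ℤ) ≤ -1-p), mul_nonneg (mul_nonneg (by omega : (0:ℤ) ≤ -3-l) (by omega : (0:ℤ) ≤ m-2)) (by omega : (0:ℤ) ≤ -1-p)]
  · right; nlinarith [mul_nonneg (by omega : (0:ℤ) ≤ -3-l) (by omega : (0:ℤ) ≤ -1-m), mul_nonneg (by omega : (0:ℤ) ≤ -3-l) (by omega : (0:ℤ) ≤ p-2), mul_nonneg (by omega : (0:ℤ) ≤ -1-m) (by omega : (0:ℤ) ≤ p-2), mul_nonneg (mul_nonneg (by omega : (0:ℤ) ≤ -3-l) (by omega : (0:ℤ) ≤ -1-m)) (by omega : (0:ℤ) ≤ p-2)]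
  · left; nlinarith [mul_nonneg (by omega : (0:ℤ) ≤ -3-l) (by omega : (0:ℤ) ≤ -1-m), mul_nonneg (by omega : (0:ℤ) ≤ -3-l) (by omega : (0:ℤ) ≤ -1-p), mul_nonneg (by omega : (0:ℤ) ≤ -1-m) (by omega : (0:ℤ) ≤ -1-p), mul_nonneg (mul_nonneg (by omega : (0:ℤ) ≤ -3-l) (by omega : (0:ℤ) ≤ -1-m)) (by omega : (0:ℤ) ≤ -1-p)]
end

section
/- Let l, m, p be integers with l ∉ {0, 1, -1}, and such that if p ≠ 0 then m ∉ {0,1}, and if p = 0 then m ≠ 0. Then Δ := -2lmp + lm + lp + 2p - 1 ≠ 0. -/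
theorem delta_ne_zero (l m p : ℤ)
    (hl0 : l ≠ 0) (hl1 : l ≠ 1) (hl1' : l ≠ -1)
    (hp : p ≠ 0 → m ≠ 0 ∧ m ≠ 1)
    (hp0 : p = 0 → m ≠ 0) :
    -2 * l * m * p + l * m + l * p + 2 * p - 1 ≠ 0 := by
  intro h
  by_cases hpz : p = 0
  · subst hpz
    have hml : l * m = 1 := by linarith
    have := Int.isUnit_iff.mp (IsUnit.of_mul_eq_one (a := l) m hml)
    tauto
  · obtain ⟨hm0, hm1⟩ := hp hpz
    have key : (l * m - 1) * (2 * p - 1) = l * p := by ring_nf; linarith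
    have hc1 : IsCoprime l (l * m - 1) := ⟨m, -1, by ring⟩
    have hc2 : IsCoprime p (2 * p - 1) := ⟨2, -1, by ring⟩
    have hd1 : l ∣ 2 * p - 1 :=
      hc1.dvd_of_dvd_mul_left ⟨p, by linarith [key]⟩
    have hd2 : p ∣ l * m - 1 :=
      hc2.dvd_of_dvd_mul_left ⟨l, by linarith [key]⟩
    obtain ⟨a, ha⟩ := hd1
    obtain ⟨b, hb⟩ := hd2
    have hab : a * b = 1 := by
      have hk := key
      rw [ha, hb] at hk
      have h2 : l * p * (a * b) = l * p * 1 := by linear_combination hk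
      exact mul_left_cancel₀ (mul_ne_zero hl0 hpz) h2
    have hml : m ≥ 2 ∨ m ≤ -1 := by omega
    have hll : l ≥ 2 ∨ l ≤ -2 := by omega
    rcases Int.mul_eq_one_iff_eq_one_or_neg_one.mp hab with ⟨h1, h2⟩ | ⟨h1, h2⟩
    · subst h1 h2
      have : l * (2 * m - 1) = 3 := by linarith
      rcases hml with hm | hm <;> rcases hll with hl | hl <;> nlinarith
    · subst h1 h2
      have : l * (2 * m - 1) = 1 := by linarith
      rcases hml with hm | hm <;> rcases hll with hl | hl <;> nlinarith
end

section
/- Let l, l', m, m', n, n' be integers with |l| ≥ 3, |l'| ≥ 3, l·m ≠ 1, l·m' ≠ 1 (automatic as |l| ≥ 3 and these are integers). If 4n - 2 + l/(lm - 1) = 4n' - 2 + l/(lm' - 1) as rational numbers, then m = m' and n = n'. -/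
theorem slope_equality_case11 (l m m' n n' : ℤ)
    (hl : 3 ≤ |l|) (hm : l * m ≠ 1) (hm' : l * m' ≠ 1)
    (h : (4 * (n : ℚ) - 2) + (l : ℚ) / ((l : ℚ) * (m : ℚ) - 1)
       = (4 * (n' : ℚ) - 2) + (l : ℚ) / ((l : ℚ) * (m' : ℚ) - 1)) :
    m = m' ∧ n = n' := by
  have hl0 : l ≠ 0 := by
    intro h0; rw [h0] at hl; simp at hl
  have ha : (l * m - 1 : ℤ) ≠ 0 := by
    intro h0; exact hm (by linarith [sub_eq_zero.mp h0])
  have ha' : (l * m' - 1 : ℤ) ≠ 0 := by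
    intro h0; exact hm' (by linarith [sub_eq_zero.mp h0])
  have haQ : ((l : ℚ) * m - 1) ≠ 0 := by
    intro h0
    exact ha (by exact_mod_cast (show ((l*m-1 : ℤ) : ℚ) = 0 by push_cast; linarith))
  have haQ' : ((l : ℚ) * m' - 1) ≠ 0 := by
    intro h0
    exact ha' (by exact_mod_cast (show ((l*m'-1 : ℤ) : ℚ) = 0 by push_cast; linarith))
  -- integer key equation
  have key : l * (l * m' - 1) - l * (l * m - 1)
      = 4 * (n' - n) * ((l * m - 1) * (l * m' - 1)) := by
    have h' : (l : ℚ) / ((l : ℚ) * m - 1) - (l : ℚ) / ((l : ℚ) * m' - 1)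
        = 4 * ((n' : ℚ) - n) := by linarith
    field_simp at h'
    exact_mod_cast (by push_cast; ring_nf; ring_nf at h'; linarith :
      ((l * (l * m' - 1) - l * (l * m - 1) : ℤ) : ℚ)
        = ((4 * (n' - n) * ((l * m - 1) * (l * m' - 1)) : ℤ) : ℚ))
  have hcop : IsCoprime (l * m - 1) l := by
    exact ⟨-1, m, by ring⟩
  have hcop' : IsCoprime (l * m' - 1) l := by
    exact ⟨-1, m', by ring⟩
  have hd1 : (l * m - 1) ∣ (l * m' - 1) := by
    have : (l * m - 1) ∣ l * (l * m' - 1) := by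
      have : l * (l * m' - 1) = 4 * (n' - n) * ((l * m - 1) * (l * m' - 1))
          + l * (l * m - 1) := by linarith
      rw [this]
      exact dvd_add ⟨4 * (n' - n) * (l * m' - 1), by ring⟩ ⟨l, by ring⟩
    exact hcop.dvd_of_dvd_mul_left this
  have hd2 : (l * m' - 1) ∣ (l * m - 1) := by
    have : (l * m' - 1) ∣ l * (l * m - 1) := by
      have heq : l * (l * m - 1) = -(4 * (n' - n)) * ((l * m - 1) * (l * m' - 1))
          + l * (l * m' - 1) := by linarith
      rw [heq]
      exact dvd_add ⟨-(4 * (n' - n)) * (l * m - 1), by ring⟩ ⟨l, by ring⟩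
    exact hcop'.dvd_of_dvd_mul_left this
  have habs : (l * m - 1).natAbs = (l * m' - 1).natAbs :=
    Nat.dvd_antisymm (Int.natAbs_dvd_natAbs.mpr hd1) (Int.natAbs_dvd_natAbs.mpr hd2)
  have hcases := Int.natAbs_eq_natAbs_iff.mp habs
  rcases hcases with heq | hneg
  · -- l*m - 1 = l*m' - 1
    have hmm : m = m' := by
      have : l * m = l * m' := by linarith
      exact mul_left_cancel₀ hl0 this
    constructor
    · exact hmm
    · subst hmm
      have : 4 * (n' - n) * ((l * m - 1) * (l * m - 1)) = 0 := by linarith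
      have h2 : (n' - n) = 0 := by
        rcases mul_eq_zero.mp this with h3 | h3
        · rcases mul_eq_zero.mp h3 with h4 | h4
          · omega
          · exact h4
        · exact absurd h3 (mul_ne_zero ha ha)
      omega
  · -- l*m - 1 = -(l*m' - 1) ⇒ l*(m+m') = 2 ⇒ l ∣ 2, contradiction
    exfalso
    have : l * (m + m') = 2 := by linarith [hneg]
    have hdvd : l ∣ 2 := ⟨m + m', this.symm⟩
    have := Int.le_of_dvd (by norm_num) hdvd
    have h2 : |l| ≤ 2 := by
      rcases abs_cases l with ⟨h1, _⟩ | ⟨h1, _⟩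
      · omega
      · have : -l ∣ 2 := (neg_dvd).mpr hdvd
        have := Int.le_of_dvd (by norm_num) this
        omega
    omega
end

section
/- Let m, p be integers with m ∉ {0,1} and p ∉ {0,1}. Then |4·(2pm - p - m)/(4m·0 - 2m + 1)| = |4(2pm-p-m)/(1-2m)| ≥ 16/3. Precisely: 3·|4(2pm - p - m)| ≥ 16·|2m - 1|. -/
theorem rc_estimate_p (m p : ℤ)
    (hm0 : m ≠ 0) (hm1 : m ≠ 1) (hp0 : p ≠ 0) (hp1 : p ≠ 1) :
    3 * |4 * (2 * p * m - p - m)| ≥ 16 * |2 * m - 1| := by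
  have ha : (3:ℤ) ≤ |2 * p - 1| := le_abs.mpr (by omega)
  have hb : (3:ℤ) ≤ |2 * m - 1| := le_abs.mpr (by omega)
  have key : |4 * (2 * p * m - p - m)| = |2 * ((2 * p - 1) * (2 * m - 1)) - 2| := by
    congr 1; ring
  have h3 : |2 * ((2 * p - 1) * (2 * m - 1))| - |(2:ℤ)| ≤
      |2 * ((2 * p - 1) * (2 * m - 1)) - 2| :=
    abs_sub_abs_le_abs_sub _ _
  rw [abs_mul, abs_mul] at h3
  have h4 : 3 * |2 * m - 1| ≤ |2 * p - 1| * |2 * m - 1| :=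
    mul_le_mul_of_nonneg_right ha (abs_nonneg _)
  rw [key]
  simp only [abs_two] at h3
  nlinarith [abs_nonneg (2 * m - 1)]
end

section
/- Let l, m, p be integers with p ∉ {0,1}, l ≥ 3 or l ≤ -3, and m ≥ 2 or m ≤ -1. Then the rational number [p,-2,m,-l] := -l + 1/(m + 1/(-2 + 1/p)) satisfies |[p,-2,m,-l]| ≥ 9/4. -/
theorem continued_fraction_estimate (l m p : ℤ)
    (hp0 : p ≠ 0) (hp1 : p ≠ 1)
    (hl : 3 ≤ l ∨ l ≤ -3)
    (hm : 2 ≤ m ∨ m ≤ -1) :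
    |(-(l : ℚ)) + 1 / ((m : ℚ) + 1 / (-2 + 1 / (p : ℚ)))| ≥ 9 / 4 := by
  have hp : (2 : ℤ) ≤ p ∨ p ≤ -1 := by omega
  have hq : (p : ℚ) ≠ 0 := Int.cast_ne_zero.mpr hp0
  set u : ℚ := 1 / (p : ℚ) with hu_def
  have hu : (p : ℚ) * u = 1 := by rw [hu_def]; field_simp
  have hub : -1 ≤ u ∧ u ≤ 1 / 2 := by
    rcases hp with h | h
    · have h' : (2 : ℚ) ≤ (p : ℚ) := by exact_mod_cast h
      constructor <;> nlinarith
    · have h' : (p : ℚ) ≤ -1 := by exact_mod_cast h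
      constructor <;> nlinarith
  set x : ℚ := -2 + u with hx_def
  have hx1 : -3 ≤ x := by linarith [hub.1]
  have hx2 : x ≤ -3 / 2 := by linarith [hub.2]
  have hxne : x ≠ 0 := by intro h; rw [h] at hx2; norm_num at hx2
  set v : ℚ := 1 / x with hv_def
  have hv : x * v = 1 := by rw [hv_def]; field_simp
  have hvb : -2 / 3 ≤ v ∧ v ≤ -1 / 3 := by
    constructor <;> nlinarith
  set w : ℚ := (m : ℚ) + v with hw_def
  have hw : |w| ≥ 4 / 3 := by
    rcases hm with h | h
    · have h' : (2 : ℚ) ≤ (m : ℚ) := by exact_mod_cast h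
      rw [abs_of_pos (by linarith [hvb.1])]
      linarith [hvb.1]
    · have h' : (m : ℚ) ≤ -1 := by exact_mod_cast h
      rw [abs_of_neg (by linarith [hvb.2])]
      linarith [hvb.2]
  have hwne : w ≠ 0 := by
    intro h; rw [h] at hw; norm_num at hw
  have hinv : |1 / w| ≤ 3 / 4 := by
    rw [abs_div, abs_one, div_le_iff₀ (by positivity)]
    linarith
  have hl' : (3 : ℚ) ≤ |(l : ℚ)| := by
    rcases hl with h | h
    · have : (3 : ℚ) ≤ (l : ℚ) := by exact_mod_cast h
      rw [abs_of_pos (by linarith)]; linarith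
    · have : (l : ℚ) ≤ -3 := by exact_mod_cast h
      rw [abs_of_neg (by linarith)]; linarith
  have key : |(l:ℚ)| ≤ |(-(l : ℚ)) + 1 / w| + |1 / w| := by
    have h := abs_add_le ((-(l : ℚ)) + 1 / w) (-(1 / w))
    simp only [add_neg_cancel_right, abs_neg] at h
    exact h
  linarith
end
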